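/- arXiv:1102.2418 — 4 statements merged into one kernel-verified Lean document; each statement's English description precedes it below -/
import Mathlib

section
/- If F ∈ M_N(ℝ) is symmetric, then for every A ∈ M_N(ℝ) the commutator [A, F∘A] has all diagonal entries equal to zero; consequently, with B(A) defined from F via the Markov prescription, the commutator [A, B(A)] also has zero diagonal, so that along any solution of the Lax equation Ȧ = [A, B(A)] the diagonal entries of A are constant in time. -/
open Matrix BigOperators Finset

/-- The commutator of two real `N × N` matrices. -/
def matComm {N : ℕ} (A B : Matrix (Fin N) (Fin N) ℝ) : Matrix (Fin N) (Fin N) ℝ :=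
  A * B - B * A

/-- The Markov prescription: `B(A)_{ij} = F_{ij} A_{ij}` off the diagonal and
`B(A)_{ii} = -∑_{j ≠ i} B(A)_{ij}`. -/
def BofA {N : ℕ} (F A : Matrix (Fin N) (Fin N) ℝ) : Matrix (Fin N) (Fin N) ℝ :=
  Matrix.of fun i j =>
    if i = j then -∑ k ∈ Finset.univ.filter (fun k => k ≠ i), F i k * A i k
    else F i j * A i j

/-!
The `i`-th diagonal entry of `[A, B]` is `∑ₖ (A i k * B k i - B i k * A k i)`. The term
`k = i` cancels by itself, so only the off-diagonal entries of `B` matter; for `B = F ∘ A` the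
remaining terms cancel termwise by the symmetry of `F`, and the Markov matrix `B(A)` differs from
`F ∘ A` only on the diagonal. Zero derivative on an interval then makes each `A t i i` constant.
-/

namespace Matrix

variable {n R : Type*} [Fintype n] [CommRing R]

theorem commutator_apply_self_congr {A B B' : Matrix n n R} {i : n}
    (h : ∀ k, k ≠ i → B i k = B' i k ∧ B k i = B' k i) :
    (A * B - B * A) i i = (A * B' - B' * A) i i := by
  simp only [sub_apply, mul_apply, ← Finset.sum_sub_distrib]
  refine Finset.sum_congr rfl fun k _ => ?_
  by_cases hk : k = i
  · subst hk
    ring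
  · rw [(h k hk).1, (h k hk).2]

theorem commutator_hadamard_apply_self {F : Matrix n n R} (hF : F.IsSymm) (A : Matrix n n R)
    (i : n) : (A * (F ⊙ A) - (F ⊙ A) * A) i i = 0 := by
  simp only [sub_apply, mul_apply, hadamard_apply, ← Finset.sum_sub_distrib]
  refine Finset.sum_eq_zero fun k _ => ?_
  rw [hF.apply i k]
  ring

end Matrix

theorem BofA_apply_of_ne {N : ℕ} (F A : Matrix (Fin N) (Fin N) ℝ) {i j : Fin N} (h : i ≠ j) :
    BofA F A i j = (F ⊙ A) i j := by
  simp [BofA, h]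

theorem matComm_BofA_apply_self {N : ℕ} {F : Matrix (Fin N) (Fin N) ℝ} (hF : F.IsSymm)
    (A : Matrix (Fin N) (Fin N) ℝ) (i : Fin N) : matComm A (BofA F A) i i = 0 :=
  (Matrix.commutator_apply_self_congr fun _ hk =>
    ⟨BofA_apply_of_ne F A hk.symm, BofA_apply_of_ne F A hk⟩).trans
    (Matrix.commutator_hadamard_apply_self hF A i)

theorem Set.OrdConnected.eq_of_hasDerivAt_eq_zero {E : Type*} [NormedAddCommGroup E]
    [NormedSpace ℝ E] {I : Set ℝ} (hI : I.OrdConnected) {f : ℝ → E}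
    (hf : ∀ t ∈ I, HasDerivAt f 0 t) {t₁ t₂ : ℝ} (h₁ : t₁ ∈ I) (h₂ : t₂ ∈ I) :
    f t₁ = f t₂ := by
  have h := hI.convex.norm_image_sub_le_of_norm_hasDerivWithin_le
    (fun t ht => (hf t ht).hasDerivWithinAt) (fun _ _ => norm_zero.le) h₂ h₁
  rwa [zero_mul, norm_le_zero_iff, sub_eq_zero] at h

/-- If `F` is symmetric, then `[A, F∘A]` and `[A, B(A)]` have zero diagonal for every
`A`; consequently, along any solution of the Lax equation `Ȧ = [A, B(A)]` on an
interval, the diagonal entries of `A` are constant in time. -/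
theorem diagonal_conserved (N : ℕ) (F : Matrix (Fin N) (Fin N) ℝ) (hF : F.IsSymm) :
    (∀ (A : Matrix (Fin N) (Fin N) ℝ) (i : Fin N),
      matComm A (Matrix.hadamard F A) i i = 0) ∧
    (∀ (A : Matrix (Fin N) (Fin N) ℝ) (i : Fin N),
      matComm A (BofA F A) i i = 0) ∧
    (∀ (I : Set ℝ), I.OrdConnected →
      ∀ A : ℝ → Matrix (Fin N) (Fin N) ℝ,
        (∀ t ∈ I, ∀ i j, HasDerivAt (fun s => A s i j)
          (matComm (A t) (BofA F (A t)) i j) t) →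
        ∀ (i : Fin N), ∀ t₁ ∈ I, ∀ t₂ ∈ I, A t₁ i i = A t₂ i i) := by
  refine ⟨fun A i => Matrix.commutator_hadamard_apply_self hF A i,
    matComm_BofA_apply_self hF, fun I hI A hA i t₁ h₁ t₂ h₂ => ?_⟩
  refine hI.eq_of_hasDerivAt_eq_zero (f := fun s => A s i i) (fun t ht => ?_) h₁ h₂
  simpa only [matComm_BofA_apply_self hF] using hA t ht i i
end

section
/- For every A ∈ M_N(ℝ), the matrix B(A) defined by the Markov prescription equals the Markov-algebra projection of the Hadamard product: B(A) = P_m(F∘A) = F∘A − diag((F∘A)e). In particular the Lax vector field [A, B(A)] coincides with the Hamiltonian vector field [A, P_m(∇H(A))] of the quadratic Hamiltonian H(A) = ½ Tr(A (F∘A)), whose gradient with respect to the trace pairing is ∇H(A) = F∘A. -/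
/-! The diagonal entry `-∑_{k ≠ i} F_ik A_ik` of `B(A)` equals `F_ii A_ii - ((F∘A)e)_i`, the
diagonal entry of `P_m(F∘A)`. Symmetry of `F` gives `Tr(A (F∘Y)) = Tr((F∘A) Y)`, so
`H(A + τY) = H(A) + τ Tr((F∘A) Y) + τ² H(Y)`, whose derivative at `τ = 0` is `Tr((F∘A) Y)`. -/

open Matrix BigOperators Finset

/-- The projection `P_m A = A - diag(Ae)` onto the Markov algebra. -/
def Pm {N : ℕ} (A : Matrix (Fin N) (Fin N) ℝ) : Matrix (Fin N) (Fin N) ℝ :=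
  A - Matrix.diagonal (fun i => ∑ j, A i j)

/-- The quadratic Hamiltonian `H(A) = ½ Tr(A (F∘A))`. -/
noncomputable def quadH {N : ℕ} (F A : Matrix (Fin N) (Fin N) ℝ) : ℝ :=
  (1 / 2) * (A * Matrix.hadamard F A).trace

theorem BofA_eq_Pm_hadamard {N : ℕ} (F A : Matrix (Fin N) (Fin N) ℝ) :
    BofA F A = Pm (F ⊙ A) := by
  ext i j
  by_cases h : i = j
  · subst h
    simp only [BofA, Pm, of_apply, if_pos, Matrix.sub_apply, diagonal_apply_eq, hadamard_apply]
    rw [filter_ne', sum_erase_eq_sub (mem_univ i)]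
    ring
  · simp [BofA, Pm, h]

theorem trace_mul_hadamard_of_isSymm {n α : Type*} [Fintype n] [CommSemiring α]
    {F : Matrix n n α} (hF : F.IsSymm) (A Y : Matrix n n α) :
    (A * (F ⊙ Y)).trace = ((F ⊙ A) * Y).trace := by
  calc (A * (F ⊙ Y)).trace = ∑ i, ∑ j, (A ⊙ (F ⊙ Y)ᵀ) i j := by
        rw [sum_hadamard_eq, transpose_transpose]
    _ = ∑ i, ∑ j, (F ⊙ A ⊙ Yᵀ) i j := by
        rw [transpose_hadamard, hF.eq, ← hadamard_assoc, hadamard_comm A F]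
    _ = ((F ⊙ A) * Y).trace := by rw [sum_hadamard_eq, transpose_transpose]

theorem quadH_add_smul {N : ℕ} {F : Matrix (Fin N) (Fin N) ℝ} (hF : F.IsSymm)
    (A Y : Matrix (Fin N) (Fin N) ℝ) (τ : ℝ) :
    quadH F (A + τ • Y) = quadH F A + τ * ((F ⊙ A) * Y).trace + τ ^ 2 * quadH F Y := by
  simp only [quadH, hadamard_add, hadamard_smul, add_mul, mul_add, smul_mul, Matrix.mul_smul,
    trace_add, trace_smul, smul_eq_mul, smul_smul]
  rw [trace_mul_hadamard_of_isSymm hF A Y, trace_mul_comm Y (F ⊙ A)]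
  ring

theorem hasDerivAt_quadratic_zero (a b c : ℝ) :
    HasDerivAt (fun τ : ℝ => a + τ * b + τ ^ 2 * c) b 0 :=
  ((((hasDerivAt_id (0 : ℝ)).mul_const b).const_add a).add
    ((hasDerivAt_pow 2 (0 : ℝ)).mul_const c)).congr_deriv (by simp)

/-- For symmetric `F`: `B(A)` equals the Markov projection of the Hadamard product,
`B(A) = P_m(F∘A)`; the gradient of the quadratic Hamiltonian `H(A) = ½Tr(A(F∘A))`
with respect to the trace pairing is `∇H(A) = F∘A`, i.e.
`(d/dτ) H(A + τY)|₀ = Tr((F∘A) Y)` for all `Y`; and hence the Lax vector field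
`[A, B(A)]` coincides with the Hamiltonian vector field `[A, P_m(∇H(A))]`. -/
theorem BofA_eq_Pm_hadamard_and_gradient (N : ℕ)
    (F : Matrix (Fin N) (Fin N) ℝ) (hF : F.IsSymm) :
    (∀ A : Matrix (Fin N) (Fin N) ℝ, BofA F A = Pm (Matrix.hadamard F A)) ∧
    (∀ A Y : Matrix (Fin N) (Fin N) ℝ,
      HasDerivAt (fun τ : ℝ => quadH F (A + τ • Y))
        ((Matrix.hadamard F A * Y).trace) 0) ∧
    (∀ A : Matrix (Fin N) (Fin N) ℝ,
      matComm A (BofA F A) = matComm A (Pm (Matrix.hadamard F A))) := by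
  refine ⟨BofA_eq_Pm_hadamard F, fun A Y => ?_, fun A => by rw [BofA_eq_Pm_hadamard]⟩
  simpa only [quadH_add_smul hF] using hasDerivAt_quadratic_zero _ _ (quadH F Y)
end

section
/- The quadratic Hamiltonian vector field X(A) = [A, P_m(F∘A)] (with F symmetric) leaves invariant the four subspaces appearing in the splitting of gl(N,ℝ): (i) if A ∈ m_N then X(A) ∈ m_N; (ii) if A is diagonal then X(A) = 0; (iii) for every A ∈ M_N(ℝ), X(A) has zero diagonal entries (so the zero-diagonal subspace d^⊥ is invariant); (iv) if all rows of A are equal then all rows of X(A) are equal (so m_N^⊥ is invariant). -/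
open Matrix BigOperators Finset

/-- The quadratic Hamiltonian vector field `X(A) = [A, P_m(F∘A)]`. -/
def hamVF {N : ℕ} (F A : Matrix (Fin N) (Fin N) ℝ) : Matrix (Fin N) (Fin N) ℝ :=
  matComm A (Pm (Matrix.hadamard F A))

/-- Membership in the Markov algebra `m_N`: every row sums to zero. -/
def rowZero {N : ℕ} (A : Matrix (Fin N) (Fin N) ℝ) : Prop :=
  ∀ i, ∑ j, A i j = 0

lemma Pm_apply {N : ℕ} (B : Matrix (Fin N) (Fin N) ℝ) (i j : Fin N) :
    Pm B i j = B i j - if i = j then ∑ k, B i k else 0 := by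
  simp [Pm, Matrix.sub_apply, Matrix.diagonal_apply]

lemma Pm_rowsum {N : ℕ} (B : Matrix (Fin N) (Fin N) ℝ) (i : Fin N) :
    ∑ k, Pm B i k = 0 := by
  simp only [Pm_apply, Finset.sum_sub_distrib, Finset.sum_ite_eq, Finset.mem_univ, if_true]
  ring

lemma hamVF_apply {N : ℕ} (F A : Matrix (Fin N) (Fin N) ℝ) (i k : Fin N) :
    hamVF F A i k =
      (∑ j, A i j * Pm (Matrix.hadamard F A) j k)
      - ∑ j, Pm (Matrix.hadamard F A) i j * A j k := by
  simp [hamVF, matComm, Matrix.sub_apply, Matrix.mul_apply]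

/-- For symmetric `F` the vector field `X(A) = [A, P_m(F∘A)]` leaves invariant all
four subspaces of the splitting: (i) `X(A) ∈ m_N` when `A ∈ m_N`; (ii) `X(A) = 0`
when `A` is diagonal; (iii) `X(A)` always has zero diagonal; (iv) `X(A)` has all
rows equal when `A` has all rows equal. -/
theorem hamVF_invariant_subspaces (N : ℕ)
    (F : Matrix (Fin N) (Fin N) ℝ) (hF : F.IsSymm) :
    (∀ A : Matrix (Fin N) (Fin N) ℝ, rowZero A → rowZero (hamVF F A)) ∧
    (∀ A : Matrix (Fin N) (Fin N) ℝ, A.IsDiag → hamVF F A = 0) ∧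
    (∀ (A : Matrix (Fin N) (Fin N) ℝ) (i : Fin N), hamVF F A i i = 0) ∧
    (∀ A : Matrix (Fin N) (Fin N) ℝ, (∀ i i' : Fin N, A i = A i') →
      ∀ i i' : Fin N, hamVF F A i = hamVF F A i') := by
  refine ⟨?_, ?_, ?_, ?_⟩
  · intro A hA i
    simp only [hamVF_apply, Finset.sum_sub_distrib]
    have h1 : ∀ j : Fin N, ∑ k, A i j * Pm (Matrix.hadamard F A) j k = 0 := by
      intro j; rw [← Finset.mul_sum, Pm_rowsum, mul_zero]
    have h2 : ∀ j : Fin N, ∑ k, Pm (Matrix.hadamard F A) i j * A j k = 0 := by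
      intro j; rw [← Finset.mul_sum, hA j, mul_zero]
    rw [Finset.sum_comm, Finset.sum_eq_zero (fun j _ => h1 j),
      Finset.sum_comm, Finset.sum_eq_zero (fun j _ => h2 j), sub_zero]
  · intro A hA
    have hP : Pm (Matrix.hadamard F A) = 0 := by
      ext i j
      by_cases h : i = j
      · subst h
        have hsum : ∑ k, F i k * A i k = F i i * A i i := by
          refine Finset.sum_eq_single i (fun k _ hk => ?_) (fun h => absurd (Finset.mem_univ i) h)
          rw [hA (Ne.symm hk), mul_zero]
        simp [Pm_apply, Matrix.hadamard_apply, hsum]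
      · simp only [Pm_apply, Matrix.hadamard_apply, if_neg h, sub_zero, Matrix.zero_apply]
        rw [hA h, mul_zero]
    simp [hamVF, hP, matComm]
  · intro A i
    rw [hamVF_apply, sub_eq_zero]
    apply Finset.sum_congr rfl
    intro j _
    by_cases h : i = j
    · subst h; ring
    · have hs : F j i = F i j := by
        have := congrFun (congrFun hF i) j
        simpa [Matrix.transpose_apply] using this
      simp only [Pm_apply, Matrix.hadamard_apply, if_neg h, if_neg (Ne.symm h), sub_zero]
      rw [hs]; ring
  · intro A hA i i'
    ext k
    have hrow : ∀ m : Fin N, ∑ j, Pm (Matrix.hadamard F A) m j * A j k = 0 := by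
      intro m
      have : ∀ j : Fin N, Pm (Matrix.hadamard F A) m j * A j k
          = Pm (Matrix.hadamard F A) m j * A m k := by
        intro j; rw [hA j m]
      rw [Finset.sum_congr rfl (fun j _ => this j), ← Finset.sum_mul, Pm_rowsum, zero_mul]
    simp only [hamVF_apply, hrow, sub_zero]
    apply Finset.sum_congr rfl
    intro j _
    rw [hA i i']
end

section
/- The Lax vector field preserves lower-triangularity: for any F ∈ M_N(ℝ) and any lower-triangular matrix A ∈ M_N(ℝ), the matrix B(A) is lower triangular and the commutator [A, B(A)] is lower triangular. Consequently, the set of lower-triangular matrices is invariant under the flow of Ȧ = [A, B(A)]. -/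
open Matrix BigOperators Finset

/-- `L` is lower triangular: `L_{ij} = 0` whenever `i < j`. -/
def lowerTri {N : ℕ} (L : Matrix (Fin N) (Fin N) ℝ) : Prop :=
  ∀ i j : Fin N, i < j → L i j = 0

/-!
Lower-triangularity of `B(A)` and `[A, B(A)]` is entrywise bookkeeping. For the flow, split
`A = L + U` with `U` the strictly upper part. Since `B` is linear and `[L, B(L)]` is lower
triangular, the strictly upper part of `[A, B(A)]` is that of `[A, B(U)] + [U, B(L)]`, which is
linear in `U` with coefficients continuous in time. So `U` solves a linear ODE, and by uniqueness
of solutions it vanishes identically as soon as it vanishes at one time.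
-/

open scoped NNReal

theorem eqOn_zero_of_hasDerivAt_clm_apply {E : Type*} [NormedAddCommGroup E] [NormedSpace ℝ E]
    {I : Set ℝ} (hI : I.OrdConnected) {T : ℝ → E →L[ℝ] E} (hT : ContinuousOn T I)
    {f : ℝ → E} (hf : ∀ t ∈ I, HasDerivAt f (T t (f t)) t) {t₀ : ℝ} (ht₀ : t₀ ∈ I)
    (hf₀ : f t₀ = 0) : Set.EqOn f 0 I := by
  have hzero : ∀ t, HasDerivAt (0 : ℝ → E) (T t ((0 : ℝ → E) t)) t := fun t => by simp
  have lipschitz :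
      ∀ a b, Set.Icc a b ⊆ I → ∃ K : ℝ≥0, ∀ t ∈ Set.Icc a b, LipschitzWith K (T t) := by
    intro a b hab
    obtain ⟨C, hC⟩ := isCompact_Icc.exists_bound_of_continuousOn (hT.mono hab)
    exact ⟨C.toNNReal, fun t ht => (T t).lipschitz.weaken
      (by simpa using Real.toNNReal_le_toNNReal (hC t ht))⟩
  intro t ht
  rcases le_total t₀ t with hle | hle
  · have hsub : Set.Icc t₀ t ⊆ I := hI.out ht₀ ht
    obtain ⟨K, hK⟩ := lipschitz t₀ t hsub
    refine ODE_solution_unique_of_mem_Icc_right (s := fun _ => Set.univ)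
      (fun s hs => (hK s (Set.Ico_subset_Icc_self hs)).lipschitzOnWith)
      (fun s hs => (hf s (hsub hs)).continuousAt.continuousWithinAt)
      (fun s hs => (hf s (hsub (Set.Ico_subset_Icc_self hs))).hasDerivWithinAt)
      (fun _ _ => trivial)
      continuousOn_const (fun s _ => (hzero s).hasDerivWithinAt) (fun _ _ => trivial) hf₀
      ⟨hle, le_rfl⟩
  · have hsub : Set.Icc t t₀ ⊆ I := hI.out ht ht₀
    obtain ⟨K, hK⟩ := lipschitz t t₀ hsub
    refine ODE_solution_unique_of_mem_Icc_left (s := fun _ => Set.univ)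
      (fun s hs => (hK s (Set.Ioc_subset_Icc_self hs)).lipschitzOnWith)
      (fun s hs => (hf s (hsub hs)).continuousAt.continuousWithinAt)
      (fun s hs => (hf s (hsub (Set.Ioc_subset_Icc_self hs))).hasDerivWithinAt)
      (fun _ _ => trivial)
      continuousOn_const (fun s _ => (hzero s).hasDerivWithinAt) (fun _ _ => trivial) hf₀
      ⟨le_rfl, hle⟩

section StrictUpper

variable {n R : Type*} [LinearOrder n] [Semiring R]

def Matrix.strictUpper : Matrix n n R →ₗ[R] Matrix n n R where
  toFun M := Matrix.of fun i j => if i < j then M i j else 0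
  map_add' M M' := by ext i j; by_cases h : i < j <;> simp [h]
  map_smul' c M := by ext i j; by_cases h : i < j <;> simp [h]

@[simp]
theorem Matrix.strictUpper_apply (M : Matrix n n R) (i j : n) :
    M.strictUpper i j = if i < j then M i j else 0 := rfl

end StrictUpper

variable {N : ℕ}

theorem strictUpper_eq_zero_iff_lowerTri {M : Matrix (Fin N) (Fin N) ℝ} :
    M.strictUpper = 0 ↔ lowerTri M := by
  refine ⟨fun h i j hij => by simpa [hij] using congrFun₂ h i j, fun h => ?_⟩
  ext i j
  by_cases hij : i < j <;> simp [hij, h i j]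

theorem lowerTri_sub_strictUpper (M : Matrix (Fin N) (Fin N) ℝ) :
    lowerTri (M - M.strictUpper) :=
  fun i j hij => by simp [hij]

theorem BofA_add (F M M' : Matrix (Fin N) (Fin N) ℝ) :
    BofA F (M + M') = BofA F M + BofA F M' := by
  ext i j
  by_cases h : i = j <;> simp [BofA, h, mul_add, Finset.sum_add_distrib, add_comm]

theorem BofA_smul (F M : Matrix (Fin N) (Fin N) ℝ) (c : ℝ) :
    BofA F (c • M) = c • BofA F M := by
  ext i j
  by_cases h : i = j <;> simp [BofA, h, Finset.mul_sum, mul_left_comm]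

theorem lowerTri_BofA (F : Matrix (Fin N) (Fin N) ℝ) {A : Matrix (Fin N) (Fin N) ℝ}
    (hA : lowerTri A) : lowerTri (BofA F A) := fun i j hij => by
  simp [BofA, hij.ne, hA i j hij]

theorem lowerTri.mul {A B : Matrix (Fin N) (Fin N) ℝ} (hA : lowerTri A) (hB : lowerTri B) :
    lowerTri (A * B) := fun i j hij => by
  rw [Matrix.mul_apply]
  refine Finset.sum_eq_zero fun k _ => ?_
  rcases lt_or_ge i k with hik | hki
  · rw [hA i k hik, zero_mul]
  · rw [hB k j (hki.trans_lt hij), mul_zero]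

theorem lowerTri.sub {A B : Matrix (Fin N) (Fin N) ℝ} (hA : lowerTri A) (hB : lowerTri B) :
    lowerTri (A - B) := fun i j hij => by
  simp [hA i j hij, hB i j hij]

theorem lowerTri.matComm {A B : Matrix (Fin N) (Fin N) ℝ} (hA : lowerTri A) (hB : lowerTri B) :
    lowerTri (matComm A B) :=
  (hA.mul hB).sub (hB.mul hA)

theorem lowerTri_matComm_BofA (F : Matrix (Fin N) (Fin N) ℝ) {A : Matrix (Fin N) (Fin N) ℝ}
    (hA : lowerTri A) : lowerTri (matComm A (BofA F A)) :=
  hA.matComm (lowerTri_BofA F hA)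

theorem matComm_add_left (A A' B : Matrix (Fin N) (Fin N) ℝ) :
    matComm (A + A') B = matComm A B + matComm A' B := by
  simp only [matComm, add_mul, mul_add]; abel

theorem matComm_add_right (A B B' : Matrix (Fin N) (Fin N) ℝ) :
    matComm A (B + B') = matComm A B + matComm A B' := by
  simp only [matComm, add_mul, mul_add]; abel

theorem matComm_smul_left (c : ℝ) (A B : Matrix (Fin N) (Fin N) ℝ) :
    matComm (c • A) B = c • matComm A B := by
  simp only [matComm, smul_mul_assoc, mul_smul_comm, smul_sub]

theorem matComm_smul_right (c : ℝ) (A B : Matrix (Fin N) (Fin N) ℝ) :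
    matComm A (c • B) = c • matComm A B := by
  simp only [matComm, smul_mul_assoc, mul_smul_comm, smul_sub]

def laxUpperDrift (F : Matrix (Fin N) (Fin N) ℝ) :
    Matrix (Fin N) (Fin N) ℝ →ₗ[ℝ] Matrix (Fin N) (Fin N) ℝ →ₗ[ℝ] Matrix (Fin N) (Fin N) ℝ :=
  LinearMap.mk₂ ℝ
    (fun A X => (matComm A (BofA F X) + matComm X (BofA F (A - A.strictUpper))).strictUpper)
    (fun A A' X => by
      simp only [map_add, BofA_add, matComm_add_left, matComm_add_right, add_sub_add_comm]; abel)
    (fun c A X => by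
      simp only [map_smul, ← smul_sub, BofA_smul, matComm_smul_left, matComm_smul_right]
      rw [← smul_add, map_smul])
    (fun A X X' => by
      simp only [map_add, BofA_add, matComm_add_left, matComm_add_right]; abel)
    (fun c A X => by
      simp only [BofA_smul, matComm_smul_left, matComm_smul_right]
      rw [← smul_add, map_smul])

theorem strictUpper_matComm_BofA (F A : Matrix (Fin N) (Fin N) ℝ) :
    (matComm A (BofA F A)).strictUpper = laxUpperDrift F A A.strictUpper := by
  set U := A.strictUpper
  set L := A - U
  have hsplit : matComm A (BofA F A) =
      matComm A (BofA F U) + matComm U (BofA F L) + matComm L (BofA F L) := by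
    rw [add_assoc, ← matComm_add_left, add_sub_cancel, ← matComm_add_right, ← BofA_add,
      add_sub_cancel]
  have hL : (matComm L (BofA F L)).strictUpper = 0 :=
    strictUpper_eq_zero_iff_lowerTri.mpr (lowerTri_matComm_BofA F (lowerTri_sub_strictUpper A))
  rw [hsplit, map_add, hL, add_zero]
  rfl

-- Any norm would do; the entrywise sup norm is the one for which `hasDerivAt_pi` applies.
attribute [local instance] Matrix.normedAddCommGroup Matrix.normedSpace

theorem lowerTri_of_hasDerivAt_matComm_BofA {F : Matrix (Fin N) (Fin N) ℝ} {I : Set ℝ}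
    (hI : I.OrdConnected) {A : ℝ → Matrix (Fin N) (Fin N) ℝ}
    (hA : ∀ t ∈ I, HasDerivAt A (matComm (A t) (BofA F (A t))) t) {t₀ : ℝ} (ht₀ : t₀ ∈ I)
    (h₀ : lowerTri (A t₀)) {t : ℝ} (ht : t ∈ I) : lowerTri (A t) := by
  let D :
      Matrix (Fin N) (Fin N) ℝ →L[ℝ] Matrix (Fin N) (Fin N) ℝ →L[ℝ] Matrix (Fin N) (Fin N) ℝ :=
    LinearMap.toContinuousLinearMap
      (LinearMap.toContinuousLinearMap.toLinearMap ∘ₗ laxUpperDrift F)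
  have hD : ContinuousOn (fun s => D (A s)) I :=
    D.continuous.comp_continuousOn fun s hs => (hA s hs).continuousAt.continuousWithinAt
  have hU : ∀ s ∈ I, HasDerivAt (fun s => (A s).strictUpper) (D (A s) (A s).strictUpper) s :=
    fun s hs => by
      have := (LinearMap.toContinuousLinearMap Matrix.strictUpper).hasFDerivAt.comp_hasDerivAt s
        (hA s hs)
      simp only [LinearMap.coe_toContinuousLinearMap', strictUpper_matComm_BofA] at this
      exact this
  exact strictUpper_eq_zero_iff_lowerTri.mp <| eqOn_zero_of_hasDerivAt_clm_apply hI hD hU ht₀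
    (strictUpper_eq_zero_iff_lowerTri.mpr h₀) ht

/-- The Lax vector field preserves lower-triangularity: for lower-triangular `A`,
both `B(A)` and `[A, B(A)]` are lower triangular; consequently the set of
lower-triangular matrices is invariant under the flow of `Ȧ = [A, B(A)]`. -/
theorem lax_preserves_lower_triangular (N : ℕ) (F : Matrix (Fin N) (Fin N) ℝ) :
    (∀ A : Matrix (Fin N) (Fin N) ℝ, lowerTri A → lowerTri (BofA F A)) ∧
    (∀ A : Matrix (Fin N) (Fin N) ℝ, lowerTri A → lowerTri (matComm A (BofA F A))) ∧
    (∀ (I : Set ℝ), I.OrdConnected →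
      ∀ A : ℝ → Matrix (Fin N) (Fin N) ℝ,
        (∀ t ∈ I, ∀ i j, HasDerivAt (fun s => A s i j)
          (matComm (A t) (BofA F (A t)) i j) t) →
        ∀ t₀ ∈ I, lowerTri (A t₀) → ∀ t ∈ I, lowerTri (A t)) := by
  refine ⟨fun _ => lowerTri_BofA F, fun _ => lowerTri_matComm_BofA F, ?_⟩
  intro I hI A hA t₀ ht₀ h₀ t ht
  have hA' : ∀ s ∈ I, HasDerivAt A (matComm (A s) (BofA F (A s))) s := fun s hs =>
    hasDerivAt_pi.mpr fun i => hasDerivAt_pi.mpr (hA s hs i)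
  exact lowerTri_of_hasDerivAt_matComm_BofA hI hA' ht₀ h₀ ht
end
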